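/- Every polynomial in the intersection J_{C3} ∩ J_{K13} that is homogeneous of total degree 3 and involves only the variables x1, y1, x2, y2, x3, y3 (i.e., has degree 0 in x4 and y4) is zero. -/

import Mathlib

/-!
Setting `x₄ = y₄ = 0` fixes `f` and kills two generators of `J_{C3}`, so `f` is a multiple of
`g = x₁x₃ - y₁y₃`, and by homogeneity `f = q g` with `q` linear. Setting `x₂ = y₂ = 0` kills
`J_{K13}` but not `g`, so `q` only involves `x₂, y₂`. A second substitution fixes `x₂, y₂`, kills
`J_{K13}` and sends `g` to `y₂² - x₂² ≠ 0`, hence `q = 0`.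
-/

/- Variables: the polynomial ring K[x1,x2,x3,x4,y1,y2,y3,y4] is modelled as
`MvPolynomial (Fin 4 ⊕ Fin 4) K`, where `x (k-1) = X (Sum.inl (k-1))` stands for x_k and
`y (k-1) = X (Sum.inr (k-1))` stands for y_k. -/

open MvPolynomial

noncomputable section

variable (K : Type*) [Field K]

/-- x_(i+1) -/
noncomputable def x (i : Fin 4) : MvPolynomial (Fin 4 ⊕ Fin 4) K := X (Sum.inl i)

/-- y_(i+1) -/
noncomputable def y (i : Fin 4) : MvPolynomial (Fin 4 ⊕ Fin 4) K := X (Sum.inr i)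

/-- The parity binomial edge ideal of the triangle on vertices {1,3,4}. -/
noncomputable def JC3 : Ideal (MvPolynomial (Fin 4 ⊕ Fin 4) K) :=
  Ideal.span {x K 0 * x K 2 - y K 0 * y K 2,
              x K 0 * x K 3 - y K 0 * y K 3,
              x K 2 * x K 3 - y K 2 * y K 3}

/-- The parity binomial edge ideal of the star with center 2 and leaves 1,3,4. -/
noncomputable def JK13 : Ideal (MvPolynomial (Fin 4 ⊕ Fin 4) K) :=
  Ideal.span {x K 0 * x K 1 - y K 0 * y K 1,
              x K 1 * x K 2 - y K 1 * y K 2,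
              x K 1 * x K 3 - y K 1 * y K 3}

section

variable {σ R : Type*}

section CommSemiring

variable [CommSemiring R]

theorem aeval_eq_self_of_forall_mem_vars {s : σ → MvPolynomial σ R} {p : MvPolynomial σ R}
    (h : ∀ i ∈ p.vars, s i = X i) : aeval s p = p := by
  conv_rhs => rw [← aeval_X_left_apply p]
  exact eval₂Hom_congr' rfl (fun i hi _ => h i hi) rfl

attribute [local instance] MvPolynomial.gradedAlgebra in
theorem homogeneousComponent_add_mul_of_isHomogeneous {g : MvPolynomial σ R} {n : ℕ}
    (hg : g.IsHomogeneous n) (p : MvPolynomial σ R) (m : ℕ) :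
    homogeneousComponent (m + n) (p * g) = homogeneousComponent m p * g := by
  rw [← decomposition.decompose'_apply, ← decomposition.decompose'_apply]
  exact DirectSum.coe_decompose_mul_add_of_right_mem (homogeneousSubmodule σ R) (b := g) hg

theorem exists_isHomogeneous_eq_mul_of_mem_span_singleton {f g : MvPolynomial σ R} {m n : ℕ}
    (hg : g.IsHomogeneous n) (hf : f.IsHomogeneous (m + n)) (hfg : f ∈ Ideal.span {g}) :
    ∃ q : MvPolynomial σ R, q.IsHomogeneous m ∧ f = q * g := by
  obtain ⟨p, rfl⟩ := Ideal.mem_span_singleton'.1 hfg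
  exact ⟨homogeneousComponent m p, homogeneousComponent_isHomogeneous m p,
    by rw [← homogeneousComponent_add_mul_of_isHomogeneous hg, homogeneousComponent_eq_self hf]⟩

def zeroVars (P : σ → Prop) [DecidablePred P] : MvPolynomial σ R →ₐ[R] MvPolynomial σ R :=
  aeval fun i => if P i then 0 else X i

end CommSemiring

theorem aeval_eq_self_of_aeval_zeroVars_eq_zero [CommRing R] [Fintype σ] {P : σ → Prop}
    [DecidablePred P] {q : MvPolynomial σ R} (hq : q.IsHomogeneous 1)
    (hq0 : zeroVars P q = 0) {s : σ → MvPolynomial σ R} (hs : ∀ i, P i → s i = X i) :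
    aeval s q = q := by
  obtain ⟨c, rfl⟩ : ∃ c : σ → R, ∑ i, c i • X i = q := by
    rw [← Submodule.mem_span_range_iff_exists_fun, ← homogeneousSubmodule_one_eq_span_X]
    exact hq
  have hc : ∀ i, ¬P i → c i = 0 := by
    have : ∑ i, (if P i then 0 else c i) • (X i : MvPolynomial σ R) = 0 := by
      rw [← hq0]
      simp [zeroVars, apply_ite]
    intro i hi
    simpa [hi] using Fintype.linearIndependent_iff.1 (linearIndependent_X σ R) _ this i
  simp only [map_sum, map_smul, aeval_X]
  refine Finset.sum_congr rfl fun i _ => ?_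
  by_cases hi : P i
  · rw [hs i hi]
  · rw [hc i hi, zero_smul, zero_smul]

end

section

open Sum

/-- `x₁, x₃ ↦ y₂`, `y₁, y₃ ↦ x₂`, `x₄, y₄ ↦ 0`, fixing `x₂, y₂`. -/
def starSubst : Fin 4 ⊕ Fin 4 → MvPolynomial (Fin 4 ⊕ Fin 4) K :=
  Sum.elim ![y K 1, x K 1, y K 1, 0] ![x K 1, y K 1, x K 1, 0]

variable {K}

theorem JC3_le_comap_zeroVars :
    JC3 K ≤ Ideal.comap (zeroVars fun i => i = inl 3 ∨ i = inr 3)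
      (Ideal.span {x K 0 * x K 2 - y K 0 * y K 2}) := by
  rw [JC3, Ideal.span_le]
  rintro _ (rfl | rfl | rfl) <;> simp [x, y, zeroVars]

theorem JK13_le_ker_zeroVars :
    JK13 K ≤ RingHom.ker (zeroVars fun i => i = inl 1 ∨ i = inr 1) := by
  rw [JK13, Ideal.span_le]
  rintro _ (rfl | rfl | rfl) <;> simp [x, y, zeroVars]

theorem JK13_le_ker_aeval_starSubst : JK13 K ≤ RingHom.ker (aeval (starSubst K)) := by
  rw [JK13, Ideal.span_le]
  rintro _ (rfl | rfl | rfl) <;> simp [x, y, starSubst, mul_comm]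

theorem mem_span_of_mem_JC3 {f : MvPolynomial (Fin 4 ⊕ Fin 4) K} (hf : f ∈ JC3 K)
    (hx4 : inl 3 ∉ f.vars) (hy4 : inr 3 ∉ f.vars) :
    f ∈ Ideal.span {x K 0 * x K 2 - y K 0 * y K 2} := by
  have hfix : zeroVars (fun i => i = inl 3 ∨ i = inr 3) f = f :=
    aeval_eq_self_of_forall_mem_vars fun i hi => if_neg <| by rintro (rfl | rfl) <;> contradiction
  simpa only [Ideal.mem_comap, hfix] using JC3_le_comap_zeroVars hf

theorem eq_zero_of_mul_mem_JK13 {q : MvPolynomial (Fin 4 ⊕ Fin 4) K} (hq : q.IsHomogeneous 1)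
    (hqg : q * (x K 0 * x K 2 - y K 0 * y K 2) ∈ JK13 K) : q = 0 := by
  have h₁ := JK13_le_ker_zeroVars hqg
  have h₂ := JK13_le_ker_aeval_starSubst hqg
  have hg₁ : zeroVars (fun i => i = inl 1 ∨ i = inr 1) (x K 0 * x K 2 - y K 0 * y K 2) ≠ 0 :=
    fun h => by simpa [x, y, zeroVars] using congrArg (eval (Sum.elim ![1, 0, 1, 0] 0)) h
  have hg₂ : aeval (starSubst K) (x K 0 * x K 2 - y K 0 * y K 2) ≠ 0 :=
    fun h => by simpa [x, y, starSubst] using congrArg (eval (Sum.elim 0 ![0, 1, 0, 0])) h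
  rw [RingHom.mem_ker, map_mul] at h₁ h₂
  have hq₁ := (mul_eq_zero.1 h₁).resolve_right hg₁
  have hq₂ : aeval (starSubst K) q = q :=
    aeval_eq_self_of_aeval_zeroVars_eq_zero hq hq₁ (by rintro _ (rfl | rfl) <;> rfl)
  exact hq₂ ▸ (mul_eq_zero.1 h₂).resolve_right hg₂

end

/-- Every polynomial in J_{C3} ∩ J_{K13} that is homogeneous of total degree 3 and
involves only the variables x1, y1, x2, y2, x3, y3 (i.e. neither x4 nor y4 occurs in it)
is zero. -/
theorem JC3_inter_JK13_no_degree_three_element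
    (f : MvPolynomial (Fin 4 ⊕ Fin 4) K)
    (hf : f ∈ JC3 K ⊓ JK13 K) (hhom : f.IsHomogeneous 3)
    (hx4 : Sum.inl (3 : Fin 4) ∉ f.vars) (hy4 : Sum.inr (3 : Fin 4) ∉ f.vars) :
    f = 0 := by
  have hg : (x K 0 * x K 2 - y K 0 * y K 2).IsHomogeneous 2 :=
    ((isHomogeneous_X _ _).mul (isHomogeneous_X _ _)).sub
      ((isHomogeneous_X _ _).mul (isHomogeneous_X _ _))
  obtain ⟨q, hq, rfl⟩ := exists_isHomogeneous_eq_mul_of_mem_span_singleton (m := 1) hg hhom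
    (mem_span_of_mem_JC3 hf.1 hx4 hy4)
  rw [eq_zero_of_mul_mem_JK13 hq hf.2, zero_mul]

end
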